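/- Let S ⊆ {1, …, d}. Then S is minimally invariant if and only if S is invariant and, for every j ∈ S, the set S \ {j} is not invariant. -/

import Mathlib

/-- Nodes of the graph: the environment node `E`, predictor nodes `V j` for
`j ∈ {1, …, d}` (represented by `Fin d`), and the response node `Y`. -/
inductive Node (d : ℕ) : Type where
  | E : Node d
  | V : Fin d → Node d
  | Y : Node d
deriving DecidableEq

/-- A directed acyclic graph on `{E} ∪ {1, …, d} ∪ {Y}` in which `E` has no
parents (`E` is exogenous). -/
structure CGraph (d : ℕ) where
  adj : Node d → Node d → Prop
  acyclic : ∀ v, ¬ Relation.TransGen adj v v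
  exogenous : ∀ v, ¬ adj v Node.E

namespace CGraph

variable {d : ℕ} (G : CGraph d)

/-- Undirected adjacency: an edge between `u` and `v` in either direction. -/
def Edge (u v : Node d) : Prop := G.adj u v ∨ G.adj v u

/-- `p` is a path between `a` and `b`: a duplicate-free list of nodes starting
at `a`, ending at `b`, with consecutive nodes adjacent (in either direction). -/
def IsPath (p : List (Node d)) (a b : Node d) : Prop :=
  p.head? = some a ∧ p.getLast? = some b ∧ p.Nodup ∧ p.Chain' G.Edge

/-- `x` is a (strict) descendant of `v`. -/
def Desc (v x : Node d) : Prop := Relation.TransGen G.adj v x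

/-- The consecutive triple `u, m, w` on a path blocks the path given `C`:
either `m` is a non-collider lying in `C`, or `m` is a collider such that
neither `m` nor any of its descendants lies in `C`. -/
def BlockedAt (C : Set (Node d)) (u m w : Node d) : Prop :=
  (¬ (G.adj u m ∧ G.adj w m) ∧ m ∈ C) ∨
  ((G.adj u m ∧ G.adj w m) ∧ m ∉ C ∧ ∀ x, G.Desc m x → x ∉ C)

/-- A path `p` is blocked by `C` if some consecutive triple on it blocks it. -/
def Blocked (C : Set (Node d)) (p : List (Node d)) : Prop :=
  ∃ q u m w r, p = q ++ u :: m :: w :: r ∧ G.BlockedAt C u m w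

/-- `a` and `b` are d-separated given `C`: every path between them is blocked. -/
def DSep (a b : Node d) (C : Set (Node d)) : Prop :=
  ∀ p, G.IsPath p a b → G.Blocked C p

/-- `S ⊆ {1, …, d}` is invariant if `E` and `Y` are d-separated given `S`. -/
def Invariant (S : Set (Fin d)) : Prop := G.DSep Node.E Node.Y (Node.V '' S)

/-- `S` is minimally invariant if it is invariant and no strict subset of `S`
is invariant. -/
def MinInvariant (S : Set (Fin d)) : Prop :=
  G.Invariant S ∧ ∀ S', S' ⊂ S → ¬ G.Invariant S'

/-- `S_AS`: the union of all minimally invariant sets. -/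
def SAS : Set (Fin d) := ⋃₀ {S | G.MinInvariant S}

/-- `S_ICP`: the intersection of all invariant sets (`∅` if there are none). -/
def SICP : Set (Fin d) :=
  {j | (∃ S, G.Invariant S) ∧ ∀ S, G.Invariant S → j ∈ S}

/-- `S_AS^m`: the union of all minimally invariant sets of cardinality `≤ m`. -/
def SASm (m : ℕ) : Set (Fin d) := ⋃₀ {S | G.MinInvariant S ∧ S.ncard ≤ m}

/-- The parents of `Y` among `{1, …, d}`. -/
def paY : Set (Fin d) := {j | G.adj (Node.V j) Node.Y}

/-- The children of `E` among `{1, …, d}`. -/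
def chE : Set (Fin d) := {j | G.adj Node.E (Node.V j)}

/-- The ancestors of `Y` among `{1, …, d}`. -/
def anY : Set (Fin d) := {j | Relation.TransGen G.adj (Node.V j) Node.Y}

/-- `PA(A)`: the union of the parent sets of the elements of `A ⊆ {1, …, d}`. -/
def paOf (A : Set (Fin d)) : Set (Fin d) := {j | ∃ i ∈ A, G.adj (Node.V j) (Node.V i)}

end CGraph

/-!
If `S` is invariant but no `S \ {j}` is, then every `j ∈ S` is an ancestor of `Y`: a path opened
by removing `j` must pass through `j` as a non-collider, so following its arrows forward from `j`
reaches `Y` or another element of `S`, and by acyclicity the latter cannot go on forever.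
Conversely, adding ancestors of `Y` to a separating set keeps `E` and `Y` separated: on a walk
made active by the new nodes, the first collider that the old set leaves closed has a directed
path to `Y` that avoids the old set, and we can short-cut along it. Hence if some `S' ⊂ S` were
invariant, so would be `S \ {j} ⊇ S'` for any `j ∈ S \ S'`.
-/

lemma List.exists_append_cons_append_cons_of_not_nodup {α : Type*} {l : List α}
    (h : ¬ l.Nodup) : ∃ A v L B, l = A ++ v :: L ++ v :: B := by
  induction l with
  | nil => simp at h
  | cons a l ih =>
    by_cases ha : a ∈ l
    · obtain ⟨L, B, rfl⟩ := List.append_of_mem ha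
      exact ⟨[], a, L, B, rfl⟩
    · obtain ⟨A, v, L, B, rfl⟩ := ih fun hl => h (List.nodup_cons.2 ⟨ha, hl⟩)
      exact ⟨a :: A, v, L, B, rfl⟩

namespace CGraph

variable {d : ℕ} (G : CGraph d)

lemma adj_asymm {u v : Node d} (h : G.adj u v) : ¬ G.adj v u :=
  fun h' => G.acyclic u ((Relation.TransGen.single h).tail h')

lemma not_desc_E (v : Node d) : ¬ G.Desc v Node.E := fun h => by
  obtain ⟨b, -, hb⟩ := Relation.TransGen.tail'_iff.1 h
  exact G.exogenous b hb

def IsWalk (p : List (Node d)) (a b : Node d) : Prop :=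
  p.head? = some a ∧ p.getLast? = some b ∧ p.IsChain G.Edge

def IsActive (C : Set (Node d)) (p : List (Node d)) : Prop :=
  ∀ u m w, [u, m, w] <:+: p → ¬ G.BlockedAt C u m w

variable {G} {C : Set (Node d)} {a b u m w v : Node d} {p l A B : List (Node d)}

lemma IsPath.isWalk (h : G.IsPath p a b) : G.IsWalk p a b := ⟨h.1, h.2.1, h.2.2.2⟩

lemma IsWalk.reverse (h : G.IsWalk p a b) : G.IsWalk p.reverse b a :=
  ⟨by simpa using h.2.1, by simpa using h.1,
    List.isChain_reverse.2 (h.2.2.imp fun _ _ h => h.symm)⟩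

lemma isWalk_append_cons_iff :
    G.IsWalk (A ++ v :: B) a b ↔ G.IsWalk (A ++ [v]) a v ∧ G.IsWalk (v :: B) v b := by
  simp only [IsWalk, List.head?_append, List.head?_cons, List.getLast?_append_cons,
    List.getLast?_singleton]
  rw [List.isChain_split]
  tauto

lemma BlockedAt.symm (h : G.BlockedAt C u m w) : G.BlockedAt C w m u := by
  unfold BlockedAt at *
  tauto

lemma not_blockedAt_iff_of_not_collider (hm : ¬ (G.adj u m ∧ G.adj w m)) :
    ¬ G.BlockedAt C u m w ↔ m ∉ C := by
  simp [BlockedAt, hm]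

lemma not_blockedAt_iff_of_collider (hm : G.adj u m ∧ G.adj w m) :
    ¬ G.BlockedAt C u m w ↔ ∃ x ∈ C, Relation.ReflTransGen G.adj m x := by
  constructor
  · intro h
    by_contra! hne
    exact h (.inr ⟨hm, fun hmC => hne m hmC .refl, fun x hx hxC => hne x hxC hx.to_reflTransGen⟩)
  · rintro ⟨x, hxC, hmx⟩ (⟨hnc, -⟩ | ⟨-, hmC, hd⟩)
    · exact hnc hm
    · rcases Relation.reflTransGen_iff_eq_or_transGen.1 hmx with rfl | hmx
      exacts [hmC hxC, hd x hmx hxC]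

lemma blocked_iff_exists_blockedAt :
    G.Blocked C p ↔ ∃ u m w, [u, m, w] <:+: p ∧ G.BlockedAt C u m w := by
  constructor
  · rintro ⟨q, u, m, w, r, rfl, hb⟩
    exact ⟨u, m, w, ⟨q, r, by simp⟩, hb⟩
  · rintro ⟨u, m, w, ⟨s, t, rfl⟩, hb⟩
    exact ⟨s, u, m, w, t, by simp, hb⟩

lemma not_blocked_iff_isActive : ¬ G.Blocked C p ↔ G.IsActive C p := by
  simp [blocked_iff_exists_blockedAt, IsActive]

lemma IsActive.infix (h : G.IsActive C p) (hl : l <:+: p) : G.IsActive C l :=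
  fun u m w hi => h u m w (hi.trans hl)

lemma IsActive.reverse (h : G.IsActive C p) : G.IsActive C p.reverse := fun u m w hi hb =>
  h w m u (by simpa using List.reverse_infix.2 hi) hb.symm

lemma isActive_of_length_lt (hl : l.length < 3) : G.IsActive C l :=
  fun u m w hi => absurd hi.length_le (by simp; omega)

lemma isActive_cons_iff : G.IsActive C (a :: l) ↔
    (∀ m w, [m, w] <+: l → ¬ G.BlockedAt C a m w) ∧ G.IsActive C l := by
  simp only [IsActive, List.infix_cons_iff, List.cons_prefix_cons]
  constructor
  · exact fun h => ⟨fun m w hi => h a m w (.inl ⟨rfl, hi⟩), fun u m w hi => h u m w (.inr hi)⟩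
  · rintro ⟨h₁, h₂⟩ u m w (⟨rfl, hi⟩ | hi)
    exacts [h₁ m w hi, h₂ u m w hi]

lemma IsActive.append_cons (hA : G.IsActive C (A ++ [v])) (hB : G.IsActive C (v :: B))
    (hjoin : ∀ x ∈ A.getLast?, ∀ z ∈ B.head?, ¬ G.BlockedAt C x v z) :
    G.IsActive C (A ++ v :: B) := by
  induction A with
  | nil => exact hB
  | cons a A ih =>
    obtain ⟨hfirst, hA⟩ := isActive_cons_iff.1 hA
    refine isActive_cons_iff.2 ⟨fun m w hmw => ?_, ih hA fun x hx => hjoin x ?_⟩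
    · rcases A with - | ⟨a', A⟩
      · obtain ⟨rfl, t, rfl⟩ : m = v ∧ [w] <+: B := by simpa using hmw
        exact hjoin a rfl w (by simp)
      · exact hfirst m w (List.prefix_of_prefix_length_le hmw ⟨B, by simp⟩ (by simp))
    · simp_all [List.getLast?_cons]

lemma exists_first_blockedAt (h : ¬ G.IsActive C p) : ∃ A x m w B,
    p = A ++ x :: m :: w :: B ∧ G.BlockedAt C x m w ∧ G.IsActive C (A ++ [x, m]) := by
  induction p with
  | nil => exact absurd (isActive_of_length_lt (by simp)) h
  | cons a p ih =>
    by_cases hfirst : ∃ m w, [m, w] <+: p ∧ G.BlockedAt C a m w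
    · obtain ⟨m, w, ⟨B, rfl⟩, hb⟩ := hfirst
      exact ⟨[], a, m, w, B, rfl, hb, isActive_of_length_lt (by simp)⟩
    · simp only [not_exists, not_and] at hfirst
      obtain ⟨A, x, m, w, B, rfl, hb, hA⟩ := ih fun hp => h (isActive_cons_iff.2 ⟨hfirst, hp⟩)
      refine ⟨a :: A, x, m, w, B, rfl, hb, isActive_cons_iff.2 ⟨fun m' w' hi => ?_, hA⟩⟩
      exact hfirst m' w' (hi.trans ⟨w :: B, by simp⟩)

lemma isActive_of_isChain_adj (hch : (a :: l).IsChain G.adj) (hl : ∀ y ∈ l, y ∉ C) :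
    G.IsActive C (a :: l) := by
  intro u m w hi
  have hmw : [m, w] <:+: l := by
    rcases List.infix_cons_iff.1 hi with hi | hi
    · exact (List.cons_prefix_cons.1 hi).2.isInfix
    · exact (List.infix_cons (List.infix_refl _)).trans hi
  have hadj : G.adj m w := by simpa using hch.infix (List.infix_cons hmw)
  exact (not_blockedAt_iff_of_not_collider fun h => G.adj_asymm hadj h.2).2
    (hl m (hmw.subset (by simp)))

lemma exists_desc_of_isActive_of_adj (hch : (u :: m :: l).IsChain G.Edge)
    (hact : G.IsActive C (u :: m :: l)) (hum : G.adj u m) :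
    ∃ y, G.Desc u y ∧ (y ∈ C ∨ y ∈ (m :: l).getLast?) := by
  induction l generalizing u m with
  | nil => exact ⟨m, .single hum, .inr rfl⟩
  | cons w l ih =>
    obtain ⟨-, hch⟩ := List.isChain_cons_cons.1 hch
    obtain ⟨hfirst, hact⟩ := isActive_cons_iff.1 hact
    rcases (List.isChain_cons_cons.1 hch).1 with hmw | hwm
    · obtain ⟨y, hy, hyC⟩ := ih hch hact hmw
      exact ⟨y, .head hum hy, by simpa using hyC⟩
    · obtain ⟨x, hxC, hmx⟩ :=
        (not_blockedAt_iff_of_collider ⟨hum, hwm⟩).1 (hfirst m w (by simp))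
      exact ⟨x, .head' hum hmx, .inl hxC⟩

lemma IsWalk.exists_desc_of_adj (hp : G.IsWalk p a b) (hact : G.IsActive C p)
    (hi : [m, w] <:+: p) (hmw : G.adj m w) : ∃ y, G.Desc m y ∧ (y ∈ C ∨ y = b) := by
  obtain ⟨s, t, rfl⟩ := hi
  have hsuffix : m :: w :: t <:+: s ++ [m, w] ++ t := ⟨s, [], by simp⟩
  obtain ⟨y, hy, hyb⟩ := exists_desc_of_isActive_of_adj (hp.2.2.infix hsuffix)
    (hact.infix hsuffix) hmw
  have hlast := hp.2.1
  simp only [List.append_assoc, List.cons_append, List.nil_append,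
    List.getLast?_append_cons, List.getLast?_cons_cons] at hlast
  exact ⟨y, hy, by simpa [hlast, eq_comm] using hyb⟩

lemma IsWalk.exists_desc_of_not_collider (hp : G.IsWalk p a b) (hact : G.IsActive C p)
    (hi : [u, m, w] <:+: p) (hnc : ¬ (G.adj u m ∧ G.adj w m)) :
    ∃ y, G.Desc m y ∧ (y ∈ C ∨ y = a ∨ y = b) := by
  have hedges : G.Edge u m ∧ G.Edge m w := by simpa using hp.2.2.infix hi
  have hout : G.adj m u ∨ G.adj m w := by unfold Edge at hedges; tauto
  rcases hout with hmu | hmw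
  · have hi' : [m, u] <:+: p.reverse := by
      simpa using List.reverse_infix.2 ((List.infix_append [] [u, m] [w]).trans hi)
    obtain ⟨y, hy, hya⟩ := hp.reverse.exists_desc_of_adj hact.reverse hi' hmu
    exact ⟨y, hy, by tauto⟩
  · obtain ⟨y, hy, hyb⟩ := hp.exists_desc_of_adj hact
      ((List.infix_append [u] [m, w] []).trans hi) hmw
    exact ⟨y, hy, by tauto⟩

/-- Cutting out the loop `v, …, v` keeps the walk active. If `v` has an edge out towards `x` or `z`
it is a non-collider at one end of the loop, hence not in `C`. If `x → v ← z`, then either the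
loop starts with an opened collider at `v`, or following the loop forwards from `v` (which cannot
return to `v`) ends at an opened collider below `v`. -/
lemma not_blockedAt_of_isActive_loop {x z : Node d} {L : List (Node d)}
    (hch : (x :: v :: (L ++ [v, z])).IsChain G.Edge)
    (hact : G.IsActive C (x :: v :: (L ++ [v, z]))) : ¬ G.BlockedAt C x v z := by
  have hout : ∀ {x z : Node d} {L : List (Node d)},
      G.IsActive C (x :: v :: (L ++ [v, z])) → G.adj v x → v ∉ C := by
    intro x z L h hvx
    obtain ⟨c, r, hcr⟩ := List.exists_cons_of_ne_nil (by simp : L ++ [v, z] ≠ [])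
    rw [hcr] at h
    exact (not_blockedAt_iff_of_not_collider fun h' => G.adj_asymm hvx h'.1).1
      (h x v c ⟨[], r, rfl⟩)
  have hxv : G.Edge x v := (List.isChain_cons_cons.1 hch).1
  have hvz : G.Edge v z := by simpa using hch.infix (l₁ := [v, z]) ⟨x :: v :: L, [], by simp⟩
  by_cases hcol : G.adj x v ∧ G.adj z v
  · rw [not_blockedAt_iff_of_collider hcol]
    obtain ⟨c, r, hcr⟩ := List.exists_cons_of_ne_nil (by simp : L ++ [v] ≠ [])
    have hL : L ++ [v, z] = c :: r ++ [z] := by simpa using congrArg (· ++ [z]) hcr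
    rw [hL] at hch hact
    have hloop : v :: c :: r <:+: x :: v :: (c :: r ++ [z]) := ⟨[x], [z], by simp⟩
    by_cases hcv : G.adj c v
    · exact (not_blockedAt_iff_of_collider ⟨hcol.1, hcv⟩).1 (hact x v c ⟨[], r ++ [z], by simp⟩)
    · have hvc : G.adj v c :=
        ((List.isChain_cons_cons.1 (hch.infix hloop)).1).resolve_right hcv
      obtain ⟨y, hy, hyC | hyv⟩ :=
        exists_desc_of_isActive_of_adj (hch.infix hloop) (hact.infix hloop) hvc
      · exact ⟨y, hyC, hy.to_reflTransGen⟩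
      · obtain rfl : v = y := by simpa [← hcr] using hyv
        exact (G.acyclic _ hy).elim
  · rw [not_blockedAt_iff_of_not_collider hcol]
    have : G.adj v x ∨ G.adj v z := by unfold Edge at hxv hvz; tauto
    rcases this with hvx | hvz
    · exact hout hact hvx
    · exact hout (L := L.reverse) (by simpa using hact.reverse) hvz

lemma IsWalk.exists_shorter_of_not_nodup (hp : G.IsWalk p a b) (hact : G.IsActive C p)
    (hnd : ¬ p.Nodup) : ∃ q, q.length < p.length ∧ G.IsWalk q a b ∧ G.IsActive C q := by
  obtain ⟨A, v, L, B, rfl⟩ := List.exists_append_cons_append_cons_of_not_nodup hnd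
  refine ⟨A ++ v :: B, by simp, ?_, ?_⟩
  · have hA := (isWalk_append_cons_iff.1 (by simpa using hp :
      G.IsWalk (A ++ v :: (L ++ v :: B)) a b)).1
    exact isWalk_append_cons_iff.2 ⟨hA, (isWalk_append_cons_iff.1 hp).2⟩
  · refine (hact.infix ⟨[], L ++ v :: B, by simp⟩).append_cons
      (hact.infix ⟨A ++ v :: L, [], by simp⟩) fun x hx z hz => ?_
    obtain ⟨A', rfl⟩ := List.getLast?_eq_some_iff.1 hx
    obtain ⟨B', rfl⟩ := List.head?_eq_some_iff.1 hz
    have hloop : x :: v :: (L ++ [v, z]) <:+: A' ++ [x] ++ v :: L ++ v :: z :: B' :=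
      ⟨A', B', by simp⟩
    exact not_blockedAt_of_isActive_loop (hp.2.2.infix hloop) (hact.infix hloop)

lemma IsWalk.exists_isPath (hp : G.IsWalk p a b) (hact : G.IsActive C p) :
    ∃ q, G.IsPath q a b ∧ G.IsActive C q := by
  induction hn : p.length using Nat.strong_induction_on generalizing p with
  | _ n ih =>
    by_cases hnd : p.Nodup
    · exact ⟨p, ⟨hp.1, hp.2.1, hnd, hp.2.2⟩, hact⟩
    · obtain ⟨q, hlt, hq, hqact⟩ := hp.exists_shorter_of_not_nodup hact hnd
      exact ih _ (hn ▸ hlt) hq hqact rfl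

lemma dsep_iff_forall_isWalk : G.DSep a b C ↔ ∀ p, G.IsWalk p a b → ¬ G.IsActive C p := by
  simp only [DSep, ← not_blocked_iff_isActive, not_not]
  refine ⟨fun h p hp => by_contra fun hb => ?_, fun h p hp => h p hp.isWalk⟩
  obtain ⟨q, hq, hqact⟩ := hp.exists_isPath (not_blocked_iff_isActive.1 hb)
  exact not_blocked_iff_isActive.2 hqact (h q hq)

/-- The first triple of a `W`-active walk that `C` blocks is a collider with a descendant in
`W \ C`, hence with a directed path to `b` avoiding `C`; short-cutting along it gives a
`C`-active walk. -/
lemma DSep.mono_of_forall_reflTransGen {W : Set (Node d)} (h : G.DSep a b C) (hCW : C ⊆ W)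
    (hWb : ∀ x ∈ W \ C, Relation.ReflTransGen G.adj x b) : G.DSep a b W := by
  rw [dsep_iff_forall_isWalk] at h ⊢
  intro p hp hact
  by_cases hC : G.IsActive C p
  · exact h p hp hC
  obtain ⟨A, x, c, z, B, rfl, hblk, hpre⟩ := exists_first_blockedAt hC
  have hxcz := hact x c z ⟨A, B, by simp⟩
  by_cases hcol : G.adj x c ∧ G.adj z c
  swap
  · have hcC : c ∈ C := by_contra fun hcC => (not_blockedAt_iff_of_not_collider hcol).2 hcC hblk
    exact (not_blockedAt_iff_of_not_collider hcol).1 hxcz (hCW hcC)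
  have hcC : ∀ y ∈ C, ¬ Relation.ReflTransGen G.adj c y :=
    fun y hy hcy => (not_blockedAt_iff_of_collider hcol).2 ⟨y, hy, hcy⟩ hblk
  obtain ⟨y, hyW, hcy⟩ := (not_blockedAt_iff_of_collider hcol).1 hxcz
  obtain ⟨l, hl, hlast⟩ := List.exists_isChain_cons_of_relationReflTransGen
    (hcy.trans (hWb y ⟨hyW, fun hyC => hcC y hyC hcy⟩))
  have hlC : ∀ y ∈ l, y ∉ C := fun y hy hyC =>
    hcC y hyC (hl.cons_induction _ _ (fun _ _ h₁ h₂ => h₂.tail h₁) .refl y hy)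
  have hp' : G.IsWalk (A ++ [x] ++ c :: z :: B) a b := by simpa using hp
  refine h (A ++ [x] ++ c :: l) (isWalk_append_cons_iff.2 ⟨(isWalk_append_cons_iff.1 hp').1,
    rfl, by rw [List.getLast?_eq_some_getLast (by simp), hlast], hl.imp fun _ _ => .inl⟩) ?_
  refine IsActive.append_cons (by simpa using hpre) (isActive_of_isChain_adj hl hlC)
    fun _ _ z' hz' => ?_
  obtain ⟨l', rfl⟩ := List.head?_eq_some_iff.1 hz'
  have hcz' : G.adj c z' := (List.isChain_cons_cons.1 hl).1
  exact (not_blockedAt_iff_of_not_collider fun h => G.adj_asymm hcz' h.2).2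
    fun hc => hcC c hc .refl

lemma DSep.exists_desc_of_not_dsep_diff (h : G.DSep a b C) (h' : ¬ G.DSep a b (C \ {v})) :
    ∃ y, G.Desc v y ∧ (y ∈ C \ {v} ∨ y = a ∨ y = b) := by
  simp only [DSep, not_forall, not_blocked_iff_isActive] at h'
  obtain ⟨p, hp, hact⟩ := h'
  obtain ⟨u, m, w, hi, hb⟩ := blocked_iff_exists_blockedAt.1 (h p hp)
  have hm := hact u m w hi
  by_cases hcol : G.adj u m ∧ G.adj w m
  · obtain ⟨x, hx, hmx⟩ := (not_blockedAt_iff_of_collider hcol).1 hm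
    exact ((not_blockedAt_iff_of_collider hcol).2 ⟨x, hx.1, hmx⟩ hb).elim
  · have hmC : m ∈ C := by_contra fun hmC => (not_blockedAt_iff_of_not_collider hcol).2 hmC hb
    obtain rfl : m = v :=
      by_contra fun hmv => (not_blockedAt_iff_of_not_collider hcol).1 hm ⟨hmC, hmv⟩
    exact hp.isWalk.exists_desc_of_not_collider hact hi hcol

variable {S T : Set (Fin d)}

lemma Invariant.mono_of_diff_subset_anY (h : G.Invariant S) (hST : S ⊆ T)
    (hT : T \ S ⊆ G.anY) : G.Invariant T := by
  refine DSep.mono_of_forall_reflTransGen h (Set.image_mono hST) ?_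
  rintro _ ⟨⟨k, hk, rfl⟩, hkS⟩
  exact (hT ⟨hk, fun hkS' => hkS ⟨k, hkS', rfl⟩⟩).to_reflTransGen

lemma Invariant.mem_anY_or_exists_desc {j : Fin d} (h : G.Invariant S)
    (h' : ¬ G.Invariant (S \ {j})) :
    j ∈ G.anY ∨ ∃ k ∈ S, G.Desc (Node.V j) (Node.V k) := by
  rw [Invariant, Set.image_sdiff (fun _ _ => Node.V.inj), Set.image_singleton] at h'
  obtain ⟨y, hy, ⟨⟨k, hk, rfl⟩, -⟩ | rfl | rfl⟩ := DSep.exists_desc_of_not_dsep_diff h h'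
  · exact .inr ⟨k, hk, hy⟩
  · exact (G.not_desc_E _ hy).elim
  · exact .inl hy

lemma Invariant.subset_anY (h : G.Invariant S) (hmin : ∀ j ∈ S, ¬ G.Invariant (S \ {j})) :
    S ⊆ G.anY := by
  by_contra hS
  obtain ⟨j, hjS, hj⟩ := Set.not_subset.1 hS
  let r : Fin d → Fin d → Prop := fun k j => G.Desc (Node.V j) (Node.V k)
  have : IsTrans (Fin d) r := ⟨fun _ _ _ h₁ h₂ => h₂.trans h₁⟩
  have : Std.Irrefl r := ⟨fun _ => G.acyclic _⟩
  obtain ⟨j, ⟨hjS, hj⟩, hmax⟩ := (Finite.wellFounded_of_trans_of_irrefl r).has_min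
    {j | j ∈ S ∧ j ∉ G.anY} ⟨j, hjS, hj⟩
  rcases h.mem_anY_or_exists_desc (hmin j hjS) with hY | ⟨k, hkS, hjk⟩
  · exact hj hY
  · exact hmax k ⟨hkS, fun hk => hj (hjk.trans hk)⟩ hjk

end CGraph

/-- `S` is minimally invariant if and only if `S` is invariant
and, for every `j ∈ S`, the set `S \ {j}` is not invariant. -/
theorem minInvariant_iff_invariant_and_remove_one {d : ℕ} (G : CGraph d)
    (S : Set (Fin d)) :
    G.MinInvariant S ↔ G.Invariant S ∧ ∀ j ∈ S, ¬ G.Invariant (S \ {j}) := by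
  refine ⟨fun h => ⟨h.1, fun j hj => h.2 _ (Set.sdiff_singleton_ssubset.2 hj)⟩, ?_⟩
  rintro ⟨hS, hmin⟩
  refine ⟨hS, fun S' hS'S hS' => ?_⟩
  obtain ⟨j, hjS, hjS'⟩ := Set.exists_of_ssubset hS'S
  have hsub : S' ⊆ S \ {j} := fun k hk => ⟨hS'S.1 hk, fun hkj => hjS' (hkj ▸ hk)⟩
  exact hmin j hjS (hS'.mono_of_diff_subset_anY hsub fun k hk => hS.subset_anY hmin hk.1.1)
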